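/- arXiv:cond-mat/0504317 — 2 statements merged into one kernel-verified Lean document; each statement's English description precedes it below -/
import Mathlib

section
/- For α > 0, ν > 0, ρ ∈ (−1,1), the function a ↦ d(a) = arcosh(1 + ((νq − ρ(a−α))² + (1−ρ²)(a−α)²)/(2(1−ρ²)αa)) (the hyperbolic distance between (−ρα, √(1−ρ²)α) and (νq − ρa, √(1−ρ²)a)) attains its minimum over a > 0 at a_min = √(α² + 2ανρq + ν²q²), and the minimal distance satisfies cosh(d(a_min)) = (−qνρ − αρ² + a_min)/(α(1−ρ²)). -/
/-- Inverse hyperbolic cosine. -/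
noncomputable def arcosh (x : ℝ) : ℝ := Real.log (x + Real.sqrt (x ^ 2 - 1))

lemma arcosh_mono {x y : ℝ} (hx : 1 ≤ x) (hxy : x ≤ y) : arcosh x ≤ arcosh y := by
  unfold arcosh
  have h1 : (0:ℝ) < x + Real.sqrt (x ^ 2 - 1) := by
    have := Real.sqrt_nonneg (x ^ 2 - 1); linarith
  apply Real.log_le_log h1
  have : Real.sqrt (x ^ 2 - 1) ≤ Real.sqrt (y ^ 2 - 1) := by
    apply Real.sqrt_le_sqrt; nlinarith
  linarith

lemma cosh_arcosh {x : ℝ} (hx : 1 ≤ x) : Real.cosh (arcosh x) = x := by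
  unfold arcosh
  have hs : Real.sqrt (x ^ 2 - 1) ^ 2 = x ^ 2 - 1 := Real.sq_sqrt (by nlinarith)
  have h1 : (0:ℝ) < x + Real.sqrt (x ^ 2 - 1) := by
    have := Real.sqrt_nonneg (x ^ 2 - 1); linarith
  rw [Real.cosh_eq, Real.exp_log h1, Real.exp_neg, Real.exp_log h1]
  field_simp
  nlinarith [hs]

/-- The hyperbolic distance from `(-ρα, √(1-ρ²)α)` to `(νq - ρa, √(1-ρ²)a)`,
as a function of `a`, is minimised over `a > 0` at
`a_min = √(α² + 2ανρq + ν²q²)`, and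
`cosh d(a_min) = (-qνρ - αρ² + a_min)/(α(1-ρ²))`. -/
theorem sabr_geodesic_distance_min (α ν ρ q : ℝ) (hα : 0 < α) (hν : 0 < ν)
    (hρ : -1 < ρ) (hρ' : ρ < 1)
    (hpos : 0 < α ^ 2 + 2 * α * ν * ρ * q + ν ^ 2 * q ^ 2) :
    let d : ℝ → ℝ := fun a => arcosh (1 +
      ((ν * q - ρ * (a - α)) ^ 2 + (1 - ρ ^ 2) * (a - α) ^ 2) /
        (2 * (1 - ρ ^ 2) * α * a))
    let amin : ℝ := Real.sqrt (α ^ 2 + 2 * α * ν * ρ * q + ν ^ 2 * q ^ 2)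
    (∀ a > 0, d amin ≤ d a) ∧
      Real.cosh (d amin) = (-(q * ν * ρ) - α * ρ ^ 2 + amin) / (α * (1 - ρ ^ 2)) := by
  intro d amin
  have hρ2 : 0 < 1 - ρ ^ 2 := by nlinarith
  have hs : amin ^ 2 = α ^ 2 + 2 * α * ν * ρ * q + ν ^ 2 * q ^ 2 :=
    Real.sq_sqrt hpos.le
  have hamin : 0 < amin := Real.sqrt_pos.mpr hpos
  set C : ℝ := (amin - α * ρ ^ 2 - ν * q * ρ) / ((1 - ρ ^ 2) * α) with hC
  have key : ∀ a : ℝ, 0 < a →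
      1 + ((ν * q - ρ * (a - α)) ^ 2 + (1 - ρ ^ 2) * (a - α) ^ 2) /
        (2 * (1 - ρ ^ 2) * α * a) = C + (a - amin) ^ 2 / (2 * (1 - ρ ^ 2) * α * a) := by
    intro a ha
    rw [hC]
    field_simp
    linear_combination (-1 : ℝ) * hs
  have hge : α + ν * q * ρ ≤ amin := by
    nlinarith [sq_nonneg (amin + α + ν * q * ρ), sq_nonneg (ν * q), hamin]
  have hC1 : 1 ≤ C := by
    rw [hC, le_div_iff₀ (by positivity)]
    nlinarith
  have hdmin : d amin = arcosh C := by
    show arcosh _ = _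
    rw [key amin hamin]
    norm_num
  constructor
  · intro a ha
    rw [hdmin]
    show arcosh C ≤ arcosh _
    rw [key a ha]
    apply arcosh_mono hC1
    have : 0 ≤ (a - amin) ^ 2 / (2 * (1 - ρ ^ 2) * α * a) := by positivity
    linarith
  · rw [hdmin, cosh_arcosh hC1, hC]
    ring
end

section
/- The calibration ODE for the H²-model: if σ_loc : (0,∞) → (0,∞) is continuous, ν > 0, α > 0, ρ ∈ (−1,1), and C(f) = σ_loc(f) / (α√(1−ρ²)·cosh(ν∫_{f₀}^f df'/σ_loc(f'))), then q(f) = ∫_{f₀}^f df'/C(f') satisfies σ_loc(f) = C(f)·√(α² + 2ρανq(f) + ν²q(f)²) for all f > 0. -/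
open Real intervalIntegral

/-- Calibration of the `H²`-model: with
`C(f) = σ_loc(f) / (α √(1-ρ²) cosh(ν ∫_{f₀}^f df'/σ_loc(f')))` and
`q(f) = ∫_{f₀}^f df'/C(f')`, one has
`σ_loc(f) = C(f) √(α² + 2ρανq(f) + ν²q(f)²)` (in the case `ρ = 0`). -/
theorem h2_model_calibration (σloc : ℝ → ℝ) (hcont : ContinuousOn σloc (Set.Ioi 0))
    (hpos : ∀ f > (0 : ℝ), 0 < σloc f) (ν α f₀ ρ : ℝ) (hν : 0 < ν) (hα : 0 < α)
    (hf₀ : 0 < f₀) (hρ : ρ = 0) :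
    let C : ℝ → ℝ := fun f =>
      σloc f / (α * Real.sqrt (1 - ρ ^ 2) *
        Real.cosh (ν * ∫ f' in f₀..f, 1 / σloc f'))
    let q : ℝ → ℝ := fun f => ∫ f' in f₀..f, 1 / C f'
    ∀ f > (0 : ℝ),
      σloc f = C f * Real.sqrt (α ^ 2 + 2 * ρ * α * ν * q f + ν ^ 2 * q f ^ 2) := by
  subst hρ
  intro C q f hf
  have hs1 : Real.sqrt (1 - (0:ℝ) ^ 2) = 1 := by norm_num
  set u : ℝ → ℝ := fun f => ∫ f' in f₀..f, 1 / σloc f' with hu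
  have hCdef : ∀ x, C x = σloc x / (α * Real.cosh (ν * u x)) := by
    intro x; simp only [C, hs1, mul_one, u]
  -- continuity of 1/σloc on Ioi 0
  have hcIoi : ∀ x ∈ Set.Ioi (0:ℝ), ContinuousAt σloc x := fun x hx =>
    hcont.continuousAt (isOpen_Ioi.mem_nhds hx)
  have hinvcont : ContinuousOn (fun x => 1 / σloc x) (Set.Ioi 0) := fun x hx =>
    (ContinuousAt.div continuousAt_const (hcIoi x hx) (hpos x hx).ne').continuousWithinAt
  have hsub : ∀ y : ℝ, 0 < y → Set.uIcc f₀ y ⊆ Set.Ioi 0 := by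
    intro y hy z hz
    have := hz.1
    have : min f₀ y ≤ z := hz.1
    exact lt_of_lt_of_le (lt_min hf₀ hy) this
  have hint : ∀ y : ℝ, 0 < y → IntervalIntegrable (fun x => 1 / σloc x) MeasureTheory.volume f₀ y :=
    fun y hy => (hinvcont.mono (hsub y hy)).intervalIntegrable
  have hu_deriv : ∀ x ∈ Set.Ioi (0:ℝ), HasDerivAt u (1 / σloc x) x := by
    intro x hx
    exact intervalIntegral.integral_hasDerivAt_right (hint x hx)
      (hinvcont.stronglyMeasurableAtFilter isOpen_Ioi x hx)
      (hinvcont.continuousAt (isOpen_Ioi.mem_nhds hx))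
  have hg_deriv : ∀ x ∈ Set.Ioi (0:ℝ),
      HasDerivAt (fun y => (α / ν) * Real.sinh (ν * u y)) (1 / C x) x := by
    intro x hx
    have h1 : HasDerivAt (fun y => ν * u y) (ν * (1 / σloc x)) x :=
      (hu_deriv x hx).const_mul ν
    have h2 := (h1.sinh).const_mul (α / ν)
    refine h2.congr_deriv ?_
    rw [hCdef, one_div_div]
    field_simp [(hpos x hx).ne']
  have hCcont : ContinuousOn (fun x => 1 / C x) (Set.Ioi 0) := by
    intro x hx
    have hux : ContinuousAt u x := (hu_deriv x hx).continuousAt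
    have : ContinuousAt (fun y => 1 / C y) x := by
      simp only [hCdef, one_div_div]
      exact ContinuousAt.div
        (ContinuousAt.mul continuousAt_const (Real.continuous_cosh.continuousAt.comp (continuousAt_const.mul hux)))
        (hcIoi x hx) (hpos x hx).ne'
    exact this.continuousWithinAt
  have hq : q f = (α / ν) * Real.sinh (ν * u f) - (α / ν) * Real.sinh (ν * u f₀) := by
    exact intervalIntegral.integral_eq_sub_of_hasDerivAt
      (fun x hx => hg_deriv x (hsub f hf hx))
      ((hCcont.mono (hsub f hf)).intervalIntegrable)
  have huf₀ : u f₀ = 0 := intervalIntegral.integral_same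
  rw [huf₀, mul_zero, Real.sinh_zero, mul_zero, sub_zero] at hq
  have hcosh : (0:ℝ) < Real.cosh (ν * u f) := Real.cosh_pos _
  have hsq : α ^ 2 + 2 * 0 * α * ν * q f + ν ^ 2 * q f ^ 2
      = (α * Real.cosh (ν * u f)) ^ 2 := by
    rw [hq]
    have : Real.cosh (ν * u f) ^ 2 = Real.sinh (ν * u f) ^ 2 + 1 := Real.cosh_sq _
    field_simp
    nlinarith [this]
  rw [hsq, Real.sqrt_sq (by positivity), hCdef]
  field_simp
end
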